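/- Let R be a commutative local ring. Then for every power series s ∈ xR[[x]] (i.e., every s ∈ R[[x]] with zero constant term), the generalized matrix ring K_s(R[[x]]) is quasipolar. -/

import Mathlib

/-- The generalized matrix ring `K_s(R)` with multiplier `s`. -/
@[ext]
structure GenMatrix (R : Type*) (s : R) where
  a : R
  b : R
  c : R
  d : R

namespace GenMatrix

variable {R : Type*} [Ring R] {s : R}

instance : Add (GenMatrix R s) :=
  ⟨fun X Y => ⟨X.a + Y.a, X.b + Y.b, X.c + Y.c, X.d + Y.d⟩⟩
instance : Neg (GenMatrix R s) := ⟨fun X => ⟨-X.a, -X.b, -X.c, -X.d⟩⟩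
instance : Zero (GenMatrix R s) := ⟨⟨0, 0, 0, 0⟩⟩
instance : One (GenMatrix R s) := ⟨⟨1, 0, 0, 1⟩⟩
instance : Mul (GenMatrix R s) :=
  ⟨fun X Y => ⟨X.a * Y.a + s * (X.b * Y.c), X.a * Y.b + X.b * Y.d,
    X.c * Y.a + X.d * Y.c, s * (X.c * Y.b) + X.d * Y.d⟩⟩

@[simp] lemma add_a (X Y : GenMatrix R s) : (X + Y).a = X.a + Y.a := rfl
@[simp] lemma add_b (X Y : GenMatrix R s) : (X + Y).b = X.b + Y.b := rfl
@[simp] lemma add_c (X Y : GenMatrix R s) : (X + Y).c = X.c + Y.c := rfl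
@[simp] lemma add_d (X Y : GenMatrix R s) : (X + Y).d = X.d + Y.d := rfl
@[simp] lemma neg_a (X : GenMatrix R s) : (-X).a = -X.a := rfl
@[simp] lemma neg_b (X : GenMatrix R s) : (-X).b = -X.b := rfl
@[simp] lemma neg_c (X : GenMatrix R s) : (-X).c = -X.c := rfl
@[simp] lemma neg_d (X : GenMatrix R s) : (-X).d = -X.d := rfl
@[simp] lemma zero_a : (0 : GenMatrix R s).a = 0 := rfl
@[simp] lemma zero_b : (0 : GenMatrix R s).b = 0 := rfl
@[simp] lemma zero_c : (0 : GenMatrix R s).c = 0 := rfl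
@[simp] lemma zero_d : (0 : GenMatrix R s).d = 0 := rfl
@[simp] lemma one_a : (1 : GenMatrix R s).a = 1 := rfl
@[simp] lemma one_b : (1 : GenMatrix R s).b = 0 := rfl
@[simp] lemma one_c : (1 : GenMatrix R s).c = 0 := rfl
@[simp] lemma one_d : (1 : GenMatrix R s).d = 1 := rfl
@[simp] lemma mul_a (X Y : GenMatrix R s) : (X * Y).a = X.a * Y.a + s * (X.b * Y.c) := rfl
@[simp] lemma mul_b (X Y : GenMatrix R s) : (X * Y).b = X.a * Y.b + X.b * Y.d := rfl
@[simp] lemma mul_c (X Y : GenMatrix R s) : (X * Y).c = X.c * Y.a + X.d * Y.c := rfl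
@[simp] lemma mul_d (X Y : GenMatrix R s) : (X * Y).d = s * (X.c * Y.b) + X.d * Y.d := rfl

instance : AddCommGroup (GenMatrix R s) where
  add_assoc X Y Z := by ext <;> simp [add_assoc]
  zero_add X := by ext <;> simp
  add_zero X := by ext <;> simp
  add_comm X Y := by ext <;> simp [add_comm]
  neg_add_cancel X := by ext <;> simp
  nsmul := nsmulRec
  zsmul := zsmulRec

section Central

variable [Fact (s ∈ Set.center R)]

lemma scomm (r : R) : r * s = s * r := Semigroup.mem_center_iff.mp Fact.out r

lemma sshift (r t : R) : r * (s * t) = s * (r * t) := by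
  rw [← mul_assoc, scomm (s := s), mul_assoc]

instance : Ring (GenMatrix R s) where
  __ := (inferInstance : AddCommGroup (GenMatrix R s))
  left_distrib X Y Z := by ext <;> simp [mul_add, add_mul] <;> abel
  right_distrib X Y Z := by ext <;> simp [mul_add, add_mul] <;> abel
  zero_mul X := by ext <;> simp
  mul_zero X := by ext <;> simp
  mul_assoc X Y Z := by
    ext <;> simp only [mul_a, mul_b, mul_c, mul_d, mul_add, add_mul, mul_assoc, sshift] <;> abel
  one_mul X := by ext <;> simp
  mul_one X := by ext <;> simp

end Central

instance central_of_comm {R : Type*} [CommRing R] (s : R) : Fact (s ∈ Set.center R) :=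
  ⟨by rw [Set.center_eq_univ]; trivial⟩

/-- `det_s` of a generalized matrix over a commutative ring. -/
def dets {R : Type*} {s : R} [CommRing R] (A : GenMatrix R s) : R :=
  A.a * A.d - s * (A.b * A.c)

/-- The trace of a generalized matrix. -/
def tr {R : Type*} {s : R} [Ring R] (A : GenMatrix R s) : R := A.a + A.d

end GenMatrix

/-- An element `a` is quasinilpotent if `1 + a*x` is a unit for every `x` commuting with `a`. -/
def IsQuasinilpotent {R : Type*} [Ring R] (a : R) : Prop :=
  ∀ x : R, a * x = x * a → IsUnit (1 + a * x)

/-- An element `a` is quasipolar if there is an idempotent `p` in the double commutant of `a`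
with `a + p` a unit and `a * p` quasinilpotent. -/
def IsQuasipolar {R : Type*} [Ring R] (a : R) : Prop :=
  ∃ p : R, IsIdempotentElem p ∧ (∀ y : R, y * a = a * y → p * y = y * p) ∧
    IsUnit (a + p) ∧ IsQuasinilpotent (a * p)

/-- A ring is quasipolar if every element is quasipolar. -/
def IsQuasipolarRing (R : Type*) [Ring R] : Prop := ∀ a : R, IsQuasipolar a

/-- An element is strongly clean if it is the sum of an idempotent and a unit that commute. -/
def IsStronglyClean {R : Type*} [Ring R] (a : R) : Prop :=
  ∃ e u : R, IsIdempotentElem e ∧ IsUnit u ∧ a = e + u ∧ e * u = u * e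

/-- A ring is strongly clean if every element is strongly clean. -/
def IsStronglyCleanRing (R : Type*) [Ring R] : Prop := ∀ a : R, IsStronglyClean a

/-- `a` is similar to `b` if `b = u⁻¹ * a * u` for some unit `u`. -/
def IsSimilar {R : Type*} [Ring R] (a b : R) : Prop :=
  ∃ u : Rˣ, b = ↑u⁻¹ * a * ↑u

/-- The Jacobson radical of a ring: the intersection of all maximal left ideals. -/
def JacobsonRadical (R : Type*) [Ring R] : Ideal R := Ideal.jacobson ⊥

/-!
Let `S` be a commutative local ring with maximal ideal `𝔪` and `s ∈ 𝔪`. A generalized matrix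
`A = [[a, b], [c, d]]` over `S` with `a, d ∈ 𝔪` is quasinilpotent (take `p = 1`); one with `a, d`
units is a unit (take `p = 0`). If exactly one of `a, d` is a unit, then modulo `s` the
characteristic polynomial `t² - tr(A) t + det_s(A)` is `(t - a)(t - d)`, so it has a simple
non-unit root. When `S` is Henselian along an ideal containing `s` (as `R[[x]]`, being
`(x)`-adically complete, is along `(x)`), it factors as `(t - α)(t - β)` with `α` a unit and
`β ∈ 𝔪`, and `p = (β - α)⁻¹ (A - α)` is the required idempotent: `A p = β p`, and
`det_s (A + p) = α (1 + β)`.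
-/
open IsLocalRing Polynomial

section IsLocalRing

variable {R : Type*} [CommRing R] [IsLocalRing R]

theorem IsLocalRing.isUnit_add_of_mem_maximalIdeal {u m : R} (hu : IsUnit u)
    (hm : m ∈ maximalIdeal R) : IsUnit (u + m) := by
  by_contra h
  refine notMem_maximalIdeal.mpr hu ?_
  simpa using sub_mem ((mem_maximalIdeal _).mpr h) hm

theorem IsLocalRing.isUnit_sub_of_mem_maximalIdeal {u m : R} (hu : IsUnit u)
    (hm : m ∈ maximalIdeal R) : IsUnit (u - m) := by
  simpa [sub_eq_add_neg] using isUnit_add_of_mem_maximalIdeal hu (neg_mem hm)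

theorem HenselianRing.le_maximalIdeal (I : Ideal R) [HenselianRing R I] :
    I ≤ maximalIdeal R :=
  jacobson_eq_maximalIdeal (⊥ : Ideal R) bot_ne_top ▸ HenselianRing.jac

theorem HenselianRing.exists_quadratic_roots {I : Ideal R} [HenselianRing R I] {τ δ a : R}
    (ha : a * a - τ * a + δ ∈ I) (ha𝔪 : a ∈ maximalIdeal R) (hτa : IsUnit (τ - a)) :
    ∃ α β : R, IsUnit α ∧ β ∈ maximalIdeal R ∧ α + β = τ ∧ α * β = δ := by
  have hI := HenselianRing.le_maximalIdeal I
  have heval (t : R) : (X ^ 2 - C τ * X + C δ).eval t = t * t - τ * t + δ := by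
    simp only [eval_add, eval_sub, eval_pow, eval_mul, eval_X, eval_C]; ring
  have hderiv : IsUnit ((X ^ 2 - C τ * X + C δ).derivative.eval a) := by
    have : (X ^ 2 - C τ * X + C δ).derivative.eval a = -((τ - a) - a) := by
      simp only [derivative_add, derivative_sub, derivative_mul, derivative_X_pow, derivative_X,
        derivative_C, eval_add, eval_sub, eval_mul, eval_pow, eval_X, eval_C, eval_zero, eval_one]
      ring
    rw [this]
    exact (isUnit_sub_of_mem_maximalIdeal hτa ha𝔪).neg
  obtain ⟨β, hβ, hβa⟩ := HenselianRing.is_henselian (X ^ 2 - C τ * X + C δ) (by monicity!) a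
    (heval a ▸ ha) (hderiv.map _)
  rw [IsRoot, heval] at hβ
  refine ⟨τ - β, β, ?_, by simpa using add_mem (hI hβa) ha𝔪, sub_add_cancel τ β, ?_⟩
  · simpa using isUnit_sub_of_mem_maximalIdeal hτa (hI hβa)
  · linear_combination -hβ

end IsLocalRing

section Quasipolar

variable {R : Type*} [Ring R] {a : R}

theorem IsUnit.isQuasipolar (h : IsUnit a) : IsQuasipolar a :=
  ⟨0, .zero, fun _ _ => by simp, by simpa using h, fun _ _ => by simp⟩

theorem IsQuasinilpotent.isQuasipolar (h : IsQuasinilpotent a) : IsQuasipolar a :=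
  ⟨1, .one, fun _ _ => by simp, by simpa [add_comm] using h 1 (by simp), by simpa using h⟩

end Quasipolar

namespace GenMatrix

def scalar {R : Type*} [CommRing R] (s : R) : R →+* GenMatrix R s where
  toFun r := ⟨r, 0, 0, r⟩
  map_one' := rfl
  map_mul' r t := by ext <;> simp
  map_zero' := rfl
  map_add' r t := by ext <;> simp

variable {R : Type*} [CommRing R] {s : R}

@[simp] lemma scalar_apply (r : R) : scalar s r = ⟨r, 0, 0, r⟩ := rfl

@[simp] lemma sub_a (X Y : GenMatrix R s) : (X - Y).a = X.a - Y.a := by simp [sub_eq_add_neg]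
@[simp] lemma sub_b (X Y : GenMatrix R s) : (X - Y).b = X.b - Y.b := by simp [sub_eq_add_neg]
@[simp] lemma sub_c (X Y : GenMatrix R s) : (X - Y).c = X.c - Y.c := by simp [sub_eq_add_neg]
@[simp] lemma sub_d (X Y : GenMatrix R s) : (X - Y).d = X.d - Y.d := by simp [sub_eq_add_neg]

lemma scalar_mul_eq (r : R) (X : GenMatrix R s) :
    scalar s r * X = ⟨r * X.a, r * X.b, r * X.c, r * X.d⟩ := by
  ext <;> simp

lemma commute_scalar (r : R) (X : GenMatrix R s) : Commute (scalar s r) X := by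
  change _ * _ = _ * _
  ext <;> simp [mul_comm]

theorem isUnit_of_isUnit_dets {A : GenMatrix R s} (h : IsUnit (dets A)) : IsUnit A := by
  obtain ⟨v, hv⟩ := h.exists_left_inv
  unfold dets at hv
  refine ⟨⟨A, ⟨v * A.d, -(v * A.b), -(v * A.c), v * A.a⟩, ?_, ?_⟩, rfl⟩ <;>
    ext <;> simp only [mul_a, mul_b, mul_c, mul_d, one_a, one_b, one_c, one_d] <;>
      first | linear_combination hv | ring

theorem sub_scalar_mul_sub_scalar_eq_zero {A : GenMatrix R s} {α β : R}
    (hsum : α + β = tr A) (hprod : α * β = dets A) :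
    (A - scalar s β) * (A - scalar s α) = 0 := by
  unfold tr at hsum
  unfold dets at hprod
  ext <;> simp only [scalar_apply, mul_a, mul_b, mul_c, mul_d, sub_a, sub_b, sub_c, sub_d, sub_zero,
    zero_a, zero_b, zero_c, zero_d]
  · linear_combination (-A.a) * hsum + hprod
  · linear_combination (-A.b) * hsum
  · linear_combination (-A.c) * hsum
  · linear_combination (-A.d) * hsum + hprod

section IsLocalRing

variable [IsLocalRing R]

theorem isUnit_one_add_of_mem_maximalIdeal {M : GenMatrix R s} (ha : M.a ∈ maximalIdeal R)
    (hd : M.d ∈ maximalIdeal R) (hbc : s * (M.b * M.c) ∈ maximalIdeal R) : IsUnit (1 + M) := by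
  apply isUnit_of_isUnit_dets
  have : dets (1 + M) = 1 + (M.a + M.d + M.a * M.d - s * (M.b * M.c)) := by
    simp only [dets, add_a, add_b, add_c, add_d, one_a, one_b, one_c, one_d]; ring
  rw [this]
  exact isUnit_add_of_mem_maximalIdeal isUnit_one
    (sub_mem (add_mem (add_mem ha hd) (Ideal.mul_mem_right _ _ ha)) hbc)

theorem isQuasinilpotent_of_mem_maximalIdeal (hs : s ∈ maximalIdeal R) {M : GenMatrix R s}
    (ha : M.a ∈ maximalIdeal R) (hd : M.d ∈ maximalIdeal R) : IsQuasinilpotent M :=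
  fun _ _ => isUnit_one_add_of_mem_maximalIdeal
    (add_mem (Ideal.mul_mem_right _ _ ha) (Ideal.mul_mem_right _ _ hs))
    (add_mem (Ideal.mul_mem_right _ _ hs) (Ideal.mul_mem_right _ _ hd))
    (Ideal.mul_mem_right _ _ hs)

theorem isQuasinilpotent_scalar_mul {β : R} (hβ : β ∈ maximalIdeal R) (Y : GenMatrix R s) :
    IsQuasinilpotent (scalar s β * Y) := fun X _ => by
  rw [mul_assoc, scalar_mul_eq]
  exact isUnit_one_add_of_mem_maximalIdeal (Ideal.mul_mem_right _ _ hβ)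
    (Ideal.mul_mem_right _ _ hβ)
    (Ideal.mul_mem_left _ _ (Ideal.mul_mem_right _ _ (Ideal.mul_mem_right _ _ hβ)))

theorem isQuasipolar_of_charpoly_roots {A : GenMatrix R s} {α β : R} (hα : IsUnit α)
    (hβ : β ∈ maximalIdeal R) (hsum : α + β = tr A) (hprod : α * β = dets A) :
    IsQuasipolar A := by
  have hβα : IsUnit (β - α) := by simpa using (isUnit_sub_of_mem_maximalIdeal hα hβ).neg
  obtain ⟨v, hv⟩ := hβα.exists_left_inv
  set B := A - scalar s α
  set p := scalar s v * B
  have hAB : A * B = scalar s β * B :=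
    sub_eq_zero.mp (by rw [← sub_mul]; exact sub_scalar_mul_sub_scalar_eq_zero hsum hprod)
  have hBB : B * B = scalar s (β - α) * B := by
    calc B * B = A * B - scalar s α * B := sub_mul _ _ _
      _ = scalar s (β - α) * B := by rw [hAB, map_sub, sub_mul]
  have hp : IsIdempotentElem p := by
    calc p * p = scalar s v * scalar s v * (B * B) :=
          (commute_scalar v B).symm.mul_mul_mul_comm _ _
      _ = scalar s (v * v * (β - α)) * B := by rw [hBB, ← mul_assoc, ← map_mul, ← map_mul]
      _ = p := by rw [mul_assoc, hv, mul_one]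
  have hAp : A * p = scalar s β * p := by
    rw [(commute_scalar v A).symm.left_comm, hAB, (commute_scalar v _).left_comm]
  unfold tr at hsum
  unfold dets at hprod
  -- `A + p = α + (1 + v) B`, and `det_s (α + t B) = α² + α t (β - α)` since `det_s B = 0`.
  have hdets : dets (A + p) = α * (1 + β) := by
    simp only [dets, p, B, scalar_mul_eq, add_a, add_b, add_c, add_d, sub_a, sub_b, sub_c, sub_d,
      scalar_apply, sub_zero]
    linear_combination (-(1 + v) ^ 2) * hprod + ((1 + v) ^ 2 * α - α * (1 + v)) * hsum + α * hv
  refine ⟨p, hp, fun y hy => ?_, ?_, ?_⟩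
  · exact (commute_scalar v y).mul_left (Commute.sub_left hy.symm (commute_scalar α y))
  · exact isUnit_of_isUnit_dets (hdets ▸ hα.mul (isUnit_add_of_mem_maximalIdeal isUnit_one hβ))
  · exact hAp ▸ isQuasinilpotent_scalar_mul hβ p

theorem isQuasipolar_of_henselianRing {I : Ideal R} [HenselianRing R I] (hs : s ∈ I)
    (A : GenMatrix R s) : IsQuasipolar A := by
  have hs𝔪 : s ∈ maximalIdeal R := HenselianRing.le_maximalIdeal I hs
  have of_diag_root (t : R) (ht : t ∈ maximalIdeal R) (hu : IsUnit (tr A - t))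
      (heq : t * t - tr A * t + dets A = -(s * (A.b * A.c))) : IsQuasipolar A := by
    obtain ⟨α, β, hα, hβ, hsum, hprod⟩ := HenselianRing.exists_quadratic_roots
      (heq ▸ neg_mem (Ideal.mul_mem_right _ _ hs)) ht hu
    exact isQuasipolar_of_charpoly_roots hα hβ hsum hprod
  by_cases ha : A.a ∈ maximalIdeal R <;> by_cases hd : A.d ∈ maximalIdeal R
  · exact (isQuasinilpotent_of_mem_maximalIdeal hs𝔪 ha hd).isQuasipolar
  · exact of_diag_root A.a ha (by simpa [tr] using notMem_maximalIdeal.mp hd)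
      (by simp only [tr, dets]; ring)
  · exact of_diag_root A.d hd (by simpa [tr] using notMem_maximalIdeal.mp ha)
      (by simp only [tr, dets]; ring)
  · refine (isUnit_of_isUnit_dets ?_).isQuasipolar
    exact isUnit_sub_of_mem_maximalIdeal
      ((notMem_maximalIdeal.mp ha).mul (notMem_maximalIdeal.mp hd)) (Ideal.mul_mem_right _ _ hs𝔪)

end IsLocalRing

end GenMatrix

/-- for a commutative local ring `R` and every `s ∈ xR[[x]]` (a power series
with zero constant term), the ring `K_s(R[[x]])` is quasipolar. -/
theorem genMatrix_powerSeries_isQuasipolarRing_of_constantCoeff_eq_zero {R : Type*}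
    [CommRing R] [IsLocalRing R] (s : PowerSeries R)
    (hs : PowerSeries.constantCoeff s = 0) :
    IsQuasipolarRing (GenMatrix (PowerSeries R) s) :=
  GenMatrix.isQuasipolar_of_henselianRing (I := Ideal.span {PowerSeries.X})
    (Ideal.mem_span_singleton.mpr (PowerSeries.X_dvd_iff.mpr hs))
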